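/- arXiv:2007.07962 — 4 statements merged into one kernel-verified Lean document; each statement's English description precedes it below -/
import Mathlib

section
/- For any smooth u : Ω → ℝ on a bounded domain Ω ⊂ ℝ² with ∂ₓ²u ∈ L² and ∂_z u − (1/2)(∂ₓu)² ∈ L², the energy E_ε(u) = (1/2)∫_Ω [ε⁻¹(∂_z u − (1/2)(∂ₓu)²)² + ε(∂ₓ²u)²] satisfies the BPS decomposition E_ε(u) = ∫_Ω div Σ(∇u) + (1/2)∫_Ω ε⁻¹(∂_z u − (1/2)(∂ₓu)² − ε ∂ₓ²u)². -/
open MeasureTheory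

noncomputable def px (f : ℝ × ℝ → ℝ) (p : ℝ × ℝ) : ℝ :=
  deriv (fun s => f (s, p.2)) p.1

noncomputable def pz (f : ℝ × ℝ → ℝ) (p : ℝ × ℝ) : ℝ :=
  deriv (fun t => f (p.1, t)) p.2

lemma px_eq (f : ℝ × ℝ → ℝ) (hf : Differentiable ℝ f) (p : ℝ × ℝ) :
    px f p = fderiv ℝ f p (1, 0) := by
  have h1 : HasDerivAt (fun s : ℝ => ((s, p.2) : ℝ × ℝ)) ((1 : ℝ), (0 : ℝ)) p.1 :=
    (hasDerivAt_id _).prodMk (hasDerivAt_const _ _)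
  have h2 := (hf p).hasFDerivAt.comp_hasDerivAt p.1 h1
  exact h2.deriv

lemma pz_eq (f : ℝ × ℝ → ℝ) (hf : Differentiable ℝ f) (p : ℝ × ℝ) :
    pz f p = fderiv ℝ f p (0, 1) := by
  have h1 : HasDerivAt (fun t : ℝ => ((p.1, t) : ℝ × ℝ)) ((0 : ℝ), (1 : ℝ)) p.2 :=
    (hasDerivAt_const _ _).prodMk (hasDerivAt_id _)
  have h2 := (hf p).hasFDerivAt.comp_hasDerivAt p.2 h1
  exact h2.deriv

lemma hasDerivAt_px (f : ℝ × ℝ → ℝ) (hf : Differentiable ℝ f) (p : ℝ × ℝ) :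
    HasDerivAt (fun s => f (s, p.2)) (px f p) p.1 := by
  have h1 : HasDerivAt (fun s : ℝ => ((s, p.2) : ℝ × ℝ)) ((1 : ℝ), (0 : ℝ)) p.1 :=
    (hasDerivAt_id _).prodMk (hasDerivAt_const _ _)
  have h2 := (hf p).hasFDerivAt.comp_hasDerivAt p.1 h1
  rw [px_eq f hf p]
  exact h2

lemma hasDerivAt_pz (f : ℝ × ℝ → ℝ) (hf : Differentiable ℝ f) (p : ℝ × ℝ) :
    HasDerivAt (fun t => f (p.1, t)) (pz f p) p.2 := by
  have h1 : HasDerivAt (fun t : ℝ => ((p.1, t) : ℝ × ℝ)) ((0 : ℝ), (1 : ℝ)) p.2 :=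
    (hasDerivAt_const _ _).prodMk (hasDerivAt_id _)
  have h2 := (hf p).hasFDerivAt.comp_hasDerivAt p.2 h1
  rw [pz_eq f hf p]
  exact h2

lemma contDiff_px (f : ℝ × ℝ → ℝ) (hf : ContDiff ℝ (⊤ : ℕ∞) f) : ContDiff ℝ (⊤ : ℕ∞) (px f) := by
  have : px f = fun p => fderiv ℝ f p (1, 0) :=
    funext (px_eq f (hf.differentiable (by simp)))
  rw [this]
  exact (hf.fderiv_right (by simp)).clm_apply contDiff_const

lemma contDiff_pz (f : ℝ × ℝ → ℝ) (hf : ContDiff ℝ (⊤ : ℕ∞) f) : ContDiff ℝ (⊤ : ℕ∞) (pz f) := by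
  have : pz f = fun p => fderiv ℝ f p (0, 1) :=
    funext (pz_eq f (hf.differentiable (by simp)))
  rw [this]
  exact (hf.fderiv_right (by simp)).clm_apply contDiff_const

lemma fderiv_apply_vec (f : ℝ × ℝ → ℝ) (hf : ContDiff ℝ (⊤ : ℕ∞) f) (v : ℝ × ℝ) (p : ℝ × ℝ) :
    HasFDerivAt (fun q => fderiv ℝ f q v)
      ((ContinuousLinearMap.apply ℝ ℝ v).comp (fderiv ℝ (fderiv ℝ f) p)) p := by
  have hd : HasFDerivAt (fderiv ℝ f) (fderiv ℝ (fderiv ℝ f) p) p :=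
    (((hf.fderiv_right (m := 1) (by exact WithTop.coe_le_coe.mpr le_top)).differentiable one_ne_zero) p).hasFDerivAt
  exact (ContinuousLinearMap.apply ℝ ℝ v).hasFDerivAt.comp p hd

lemma mixed (f : ℝ × ℝ → ℝ) (hf : ContDiff ℝ (⊤ : ℕ∞) f) (p : ℝ × ℝ) :
    px (pz f) p = pz (px f) p := by
  have hpz : pz f = fun q => fderiv ℝ f q (0, 1) :=
    funext (pz_eq f (hf.differentiable (by simp)))
  have hpx : px f = fun q => fderiv ℝ f q (1, 0) :=
    funext (px_eq f (hf.differentiable (by simp)))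
  have e1 : px (pz f) p = fderiv ℝ (fderiv ℝ f) p (1, 0) (0, 1) := by
    rw [px_eq _ (by rw [hpz]; exact ((hf.fderiv_right (m := 1) (by exact WithTop.coe_le_coe.mpr le_top)).clm_apply contDiff_const).differentiable one_ne_zero) p]
    rw [hpz, (fderiv_apply_vec f hf (0, 1) p).fderiv]
    rfl
  have e2 : pz (px f) p = fderiv ℝ (fderiv ℝ f) p (0, 1) (1, 0) := by
    rw [pz_eq _ (by rw [hpx]; exact ((hf.fderiv_right (m := 1) (by exact WithTop.coe_le_coe.mpr le_top)).clm_apply contDiff_const).differentiable one_ne_zero) p]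
    rw [hpx, (fderiv_apply_vec f hf (1, 0) p).fderiv]
    rfl
  rw [e1, e2]
  exact second_derivative_symmetric (fun y => (hf.differentiable (by simp) y).hasFDerivAt)
    (((hf.fderiv_right (m := 1) (by exact WithTop.coe_le_coe.mpr le_top)).differentiable one_ne_zero p).hasFDerivAt) _ _

/-- BPS decomposition of the smectic energy:
E_ε(u) = ∫_Ω div Σ(∇u) + (1/2)∫_Ω ε⁻¹(∂_z u − (1/2)(∂ₓu)² − ε ∂ₓ²u)². -/
theorem stmt_2 (Ω : Set (ℝ × ℝ)) (hΩb : Bornology.IsBounded Ω) (hΩm : MeasurableSet Ω)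
    (u : ℝ × ℝ → ℝ) (hu : ContDiff ℝ (⊤ : ℕ∞) u) (ε : ℝ) (hε : 0 < ε)
    (h1 : IntegrableOn (fun p => (pz u p - (px u p) ^ 2 / 2) ^ 2) Ω volume)
    (h2 : IntegrableOn (fun p => (px (px u) p) ^ 2) Ω volume) :
    (1 / 2) * ∫ p in Ω,
        (ε⁻¹ * (pz u p - (px u p) ^ 2 / 2) ^ 2 + ε * (px (px u) p) ^ 2)
      = (∫ p in Ω,
            (px (fun q => px u q * pz u q - (px u q) ^ 3 / 6) p
              + pz (fun q => -(px u q) ^ 2 / 2) p))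
        + (1 / 2) * ∫ p in Ω,
            ε⁻¹ * (pz u p - (px u p) ^ 2 / 2 - ε * px (px u) p) ^ 2 := by
  set A : ℝ × ℝ → ℝ := fun p => pz u p - (px u p) ^ 2 / 2 with hA
  set B : ℝ × ℝ → ℝ := fun p => px (px u) p with hB
  clear_value A B
  have hP : ContDiff ℝ (⊤ : ℕ∞) (px u) := contDiff_px u hu
  have hZ : ContDiff ℝ (⊤ : ℕ∞) (pz u) := contDiff_pz u hu
  have h1' : IntegrableOn (fun p => A p ^ 2) Ω volume := by simpa [hA] using h1
  have h2' : IntegrableOn (fun p => B p ^ 2) Ω volume := by simpa [hB] using h2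
  have hAc : Continuous A := by
    rw [hA]; exact (hZ.continuous.sub ((hP.continuous.pow 2).div_const 2))
  have hBc : Continuous B := by rw [hB]; exact (contDiff_px (px u) hP).continuous
  -- integrability of B * A
  have hBA : IntegrableOn (fun p => B p * A p) Ω volume := by
    refine Integrable.mono' (((h1'.add h2').div_const 2)) ((hBc.mul hAc).aestronglyMeasurable) ?_
    filter_upwards with p
    have h := sq_nonneg (|A p| - |B p|)
    simp only [Pi.add_apply]
    show ‖B p * A p‖ ≤ (A p ^ 2 + B p ^ 2) / 2
    rw [Real.norm_eq_abs, abs_mul]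
    nlinarith [sq_nonneg (|A p| - |B p|), sq_abs (A p), sq_abs (B p), abs_nonneg (A p), abs_nonneg (B p)]
  have hsq : IntegrableOn (fun p => ε⁻¹ * (A p - ε * B p) ^ 2) Ω volume := by
    have he : (fun p => ε⁻¹ * (A p - ε * B p) ^ 2)
        = fun p => ε⁻¹ * (A p ^ 2) - (2) * (B p * A p) + (ε * ε⁻¹ * ε) * (B p ^ 2) := by
      funext p
      field_simp
      ring
    rw [he]
    exact ((h1'.const_mul _).sub (hBA.const_mul _)).add (h2'.const_mul _)
  -- divergence identity
  have hdiv : ∀ p, px (fun q => px u q * pz u q - (px u q) ^ 3 / 6) p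
      + pz (fun q => -(px u q) ^ 2 / 2) p = B p * A p := by
    intro p
    have hPd := hP.differentiable (by simp)
    have hZd := hZ.differentiable (by simp)
    have hx1 := ((hasDerivAt_px (px u) hPd p).mul (hasDerivAt_px (pz u) hZd p)).sub
      (((hasDerivAt_px (px u) hPd p).pow 3).div_const 6)
    have hz1 := (((hasDerivAt_pz (px u) hPd p).pow 2).neg).div_const 2
    have e1 : px (fun q => px u q * pz u q - (px u q) ^ 3 / 6) p
        = px (px u) p * pz u p + px u p * px (pz u) p
          - 3 * px u p ^ 2 * px (px u) p / 6 := by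
      exact hx1.deriv
    have e2 : pz (fun q => -(px u q) ^ 2 / 2) p
        = -(2 * px u p ^ 1 * pz (px u) p) / 2 := by
      simpa [pz] using hz1.deriv
    rw [e1, e2, mixed u hu p]
    simp only [hA, hB]
    ring
  have key : ∀ p, ε⁻¹ * A p ^ 2 + ε * B p ^ 2
      = 2 * (B p * A p) + ε⁻¹ * (A p - ε * B p) ^ 2 := by
    intro p
    field_simp
    ring
  have gA : ∀ p : ℝ × ℝ, pz u p - px u p ^ 2 / 2 = A p := fun p => by rw [hA]
  have gB : ∀ p : ℝ × ℝ, px (px u) p = B p := fun p => by rw [hB]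
  simp only [gA, gB]
  calc (1 / 2) * ∫ p in Ω, (ε⁻¹ * A p ^ 2 + ε * B p ^ 2)
      = (1 / 2) * ∫ p in Ω, (2 * (B p * A p) + ε⁻¹ * (A p - ε * B p) ^ 2) := by
        congr 1; exact integral_congr_ae (Filter.Eventually.of_forall fun p => key p)
    _ = (1 / 2) * ((∫ p in Ω, 2 * (B p * A p)) + ∫ p in Ω, ε⁻¹ * (A p - ε * B p) ^ 2) := by
        rw [integral_add (hBA.const_mul 2) hsq]
    _ = (∫ p in Ω, B p * A p) + (1 / 2) * ∫ p in Ω, ε⁻¹ * (A p - ε * B p) ^ 2 := by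
        rw [integral_const_mul]; ring
    _ = (∫ p in Ω,
            (px (fun q => px u q * pz u q - (px u q) ^ 3 / 6) p
              + pz (fun q => -(px u q) ^ 2 / 2) p))
        + (1 / 2) * ∫ p in Ω, ε⁻¹ * (A p - ε * B p) ^ 2 := by
        congr 1
        exact (integral_congr_ae (Filter.Eventually.of_forall fun p => (hdiv p))).symm
end

section
/- If m⁺, m⁻ ∈ ℝ² satisfy m₂⁺ = (m₁⁺)²/2 and m₂⁻ = (m₁⁻)²/2, m⁺ ≠ m⁻, and n = (m⁺ − m⁻)/|m⁺ − m⁻|, then (Σ(m⁺) − Σ(m⁻))·n = |m₁⁺ − m₁⁻|³ / (12√(1 + (1/4)(m₁⁺ + m₁⁻)²)). -/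
/-!
On the parabola `m₂ = m₁²/2` both the chord `m⁺ - m⁻` and the jump of `Σ` are polynomial in the
abscissae `a = m₁⁺`, `b = m₁⁻`: the chord has length `|a - b| √(1 + (a + b)²/4)`, and the jump of `Σ`
paired with the (unnormalised) chord is `(a - b)⁴/12`. Dividing by the chord length gives the claim.
-/

lemma sqrt_parabola_chord_norm_sq (a b : ℝ) :
    √((a - b) ^ 2 + (a ^ 2 / 2 - b ^ 2 / 2) ^ 2) = |a - b| * √(1 + 1 / 4 * (a + b) ^ 2) := by
  rw [← Real.sqrt_sq_eq_abs, ← Real.sqrt_mul (sq_nonneg _)]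
  ring_nf

lemma parabola_sigma_jump_inner_chord (a b : ℝ) :
    ((a * (a ^ 2 / 2) - a ^ 3 / 6) - (b * (b ^ 2 / 2) - b ^ 3 / 6)) * (a - b)
      + (-(a ^ 2) / 2 - -(b ^ 2) / 2) * (a ^ 2 / 2 - b ^ 2 / 2) = (a - b) ^ 4 / 12 := by
  ring

lemma pow_four_div_abs (x : ℝ) : x ^ 4 / |x| = |x| ^ 3 := by
  rcases eq_or_ne x 0 with rfl | hx
  · simp
  · rw [← Even.pow_abs (by decide), pow_succ, mul_div_cancel_right₀ _ (abs_ne_zero.mpr hx)]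

theorem stmt_4_general (mp1 mp2 mm1 mm2 p1 p2 n1 n2 : ℝ)
    (hparp : mp2 = mp1 ^ 2 / 2) (hparm : mm2 = mm1 ^ 2 / 2)
    (hp1 : p1 = mp1 - mm1) (hp2 : p2 = mp2 - mm2)
    (hn1 : n1 = p1 / Real.sqrt (p1 ^ 2 + p2 ^ 2))
    (hn2 : n2 = p2 / Real.sqrt (p1 ^ 2 + p2 ^ 2)) :
    ((mp1 * mp2 - mp1 ^ 3 / 6) - (mm1 * mm2 - mm1 ^ 3 / 6)) * n1
      + ((-(mp1 ^ 2) / 2) - (-(mm1 ^ 2) / 2)) * n2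
      = |mp1 - mm1| ^ 3 / (12 * Real.sqrt (1 + (1 / 4) * (mp1 + mm1) ^ 2)) := by
  subst hn1 hn2 hp1 hp2 hparp hparm
  rw [mul_div_assoc' _ (mp1 - mm1), mul_div_assoc' _ (mp1 ^ 2 / 2 - mm1 ^ 2 / 2), ← add_div,
    parabola_sigma_jump_inner_chord, sqrt_parabola_chord_norm_sq, ← pow_four_div_abs]
  ring

/-- Second expression for the jump cost (Lemma jumpexp, second form):
(Σ(m⁺) − Σ(m⁻))·n = |m₁⁺ − m₁⁻|³/(12√(1 + (1/4)(m₁⁺ + m₁⁻)²)). -/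
theorem stmt_4 (mp1 mp2 mm1 mm2 p1 p2 n1 n2 : ℝ)
    (hparp : mp2 = mp1 ^ 2 / 2) (hparm : mm2 = mm1 ^ 2 / 2)
    (hne : (mp1, mp2) ≠ (mm1, mm2))
    (hp1 : p1 = mp1 - mm1) (hp2 : p2 = mp2 - mm2)
    (hn1 : n1 = p1 / Real.sqrt (p1 ^ 2 + p2 ^ 2))
    (hn2 : n2 = p2 / Real.sqrt (p1 ^ 2 + p2 ^ 2)) :
    ((mp1 * mp2 - mp1 ^ 3 / 6) - (mm1 * mm2 - mm1 ^ 3 / 6)) * n1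
      + ((-(mp1 ^ 2) / 2) - (-(mm1 ^ 2) / 2)) * n2
      = |mp1 - mm1| ^ 3 / (12 * Real.sqrt (1 + (1 / 4) * (mp1 + mm1) ^ 2)) :=
  stmt_4_general mp1 mp2 mm1 mm2 p1 p2 n1 n2 hparp hparm hp1 hp2 hn1 hn2
end

section
/- Let u_ε be defined by ∇u_ε(x,z) = g((x,z)·ν/ε) p + m⁻ where g solves g' = W(g), g(0) = 1/2 with W(g) = |g p₂ + m₂⁻ − (g p₁ + m₁⁻)²/2|/(p₁ n₁) > 0 on (0,1), and m± lie on the parabola, p = m⁺ − m⁻, ν = n = p/|p|. Then the energy density satisfies ε⁻¹(∂_z u_ε − (1/2)(∂ₓ u_ε)²)² = ε (∂ₓ² u_ε)² pointwise (equipartition of energy). -/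
/-!
Along the travelling-wave profile the only `x`-dependence of `∂ₓu` is through `g((x n₁ + z n₂)/ε)`,
so `∂ₓ²u = g'·(n₁/ε)·p₁ = |A|/ε` with `A = ∂_z u − (∂ₓu)²/2`, because the normalisation of `W`
cancels the factor `p₁ n₁`. Then `ε⁻¹A² = ε(|A|/ε)²` is exactly the equality case `a = ε b`
of Young's inequality `2ab ≤ a²/ε + εb²`.
-/

theorem hasDerivAt_comp_affine_div {g g' : ℝ → ℝ} (hg : ∀ t, HasDerivAt g (g' t) t)
    (a b ε s : ℝ) :
    HasDerivAt (fun s => g ((s * a + b) / ε)) (g' ((s * a + b) / ε) * (a / ε)) s := by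
  have hlin : HasDerivAt (fun s : ℝ => (s * a + b) / ε) (a / ε) s := by
    simpa using (((hasDerivAt_id s).mul_const a).add_const b).div_const ε
  exact (hg _).comp s hlin

theorem px_profile {g g' : ℝ → ℝ} (hg : ∀ t, HasDerivAt g (g' t) t)
    (n1 n2 ε c d : ℝ) (q : ℝ × ℝ) :
    px (fun q => g ((q.1 * n1 + q.2 * n2) / ε) * c + d) q
      = g' ((q.1 * n1 + q.2 * n2) / ε) * (n1 / ε) * c :=
  (((hasDerivAt_comp_affine_div hg n1 (q.2 * n2) ε q.1).mul_const c).add_const d).deriv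

theorem fst_ne_of_ne_of_parabola {mp1 mp2 mm1 mm2 : ℝ}
    (hparp : mp2 = mp1 ^ 2 / 2) (hparm : mm2 = mm1 ^ 2 / 2)
    (hne : (mp1, mp2) ≠ (mm1, mm2)) : mp1 ≠ mm1 := by
  rintro rfl
  exact hne (by rw [hparp, hparm])

theorem div_sqrt_ne_zero {p1 : ℝ} (hp1 : p1 ≠ 0) (p2 : ℝ) :
    p1 / Real.sqrt (p1 ^ 2 + p2 ^ 2) ≠ 0 :=
  div_ne_zero hp1 (Real.sqrt_pos.mpr (by positivity)).ne'

theorem inv_mul_sq_eq_mul_sq_abs_div (ε a : ℝ) : ε⁻¹ * a ^ 2 = ε * (|a| / ε) ^ 2 := by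
  rw [div_pow, sq_abs]
  rcases eq_or_ne ε 0 with rfl | hε
  · simp
  · field_simp

theorem stmt_18_general (mp1 mp2 mm1 mm2 p1 p2 n1 n2 ε : ℝ)
    (hparp : mp2 = mp1 ^ 2 / 2) (hparm : mm2 = mm1 ^ 2 / 2)
    (hne : (mp1, mp2) ≠ (mm1, mm2))
    (hp1 : p1 = mp1 - mm1)
    (hn1 : n1 = p1 / Real.sqrt (p1 ^ 2 + p2 ^ 2))
    (g : ℝ → ℝ)
    (hg : ∀ t, HasDerivAt g
      (|g t * p2 + mm2 - (g t * p1 + mm1) ^ 2 / 2| / (p1 * n1)) t)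
    (u : ℝ × ℝ → ℝ)
    (hux : ∀ q : ℝ × ℝ, px u q = g ((q.1 * n1 + q.2 * n2) / ε) * p1 + mm1)
    (huz : ∀ q : ℝ × ℝ, pz u q = g ((q.1 * n1 + q.2 * n2) / ε) * p2 + mm2) :
    ∀ q : ℝ × ℝ,
      ε⁻¹ * (pz u q - (px u q) ^ 2 / 2) ^ 2 = ε * (px (px u) q) ^ 2 := by
  intro q
  have hp1_ne : p1 ≠ 0 :=
    hp1 ▸ sub_ne_zero.mpr (fst_ne_of_ne_of_parabola hparp hparm hne)
  have hn1_ne : n1 ≠ 0 := hn1 ▸ div_sqrt_ne_zero hp1_ne p2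
  have hxx : px (px u) q = |pz u q - (px u q) ^ 2 / 2| / ε := by
    rw [huz, hux, show px u = _ from funext hux, px_profile hg]
    field_simp
  rw [hxx]
  exact inv_mul_sq_eq_mul_sq_abs_div ε _

/-- Equipartition of energy for the 1D BPS ansatz: if ∇u_ε is given by the
profile g((x,z)·ν/ε) p + m⁻ with g solving g' = W(g),
W(g) = |g p₂ + m₂⁻ − (g p₁ + m₁⁻)²/2|/(p₁ n₁), then pointwise
ε⁻¹(∂_z u_ε − (1/2)(∂ₓ u_ε)²)² = ε (∂ₓ² u_ε)². -/
theorem stmt_18 (mp1 mp2 mm1 mm2 p1 p2 n1 n2 ε : ℝ) (hε : 0 < ε)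
    (hparp : mp2 = mp1 ^ 2 / 2) (hparm : mm2 = mm1 ^ 2 / 2)
    (hne : (mp1, mp2) ≠ (mm1, mm2))
    (hp1 : p1 = mp1 - mm1) (hp2 : p2 = mp2 - mm2)
    (hn1 : n1 = p1 / Real.sqrt (p1 ^ 2 + p2 ^ 2))
    (hn2 : n2 = p2 / Real.sqrt (p1 ^ 2 + p2 ^ 2))
    (g : ℝ → ℝ)
    (hg : ∀ t, HasDerivAt g
      (|g t * p2 + mm2 - (g t * p1 + mm1) ^ 2 / 2| / (p1 * n1)) t)
    (u : ℝ × ℝ → ℝ)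
    (hux : ∀ q : ℝ × ℝ, px u q = g ((q.1 * n1 + q.2 * n2) / ε) * p1 + mm1)
    (huz : ∀ q : ℝ × ℝ, pz u q = g ((q.1 * n1 + q.2 * n2) / ε) * p2 + mm2) :
    ∀ q : ℝ × ℝ,
      ε⁻¹ * (pz u q - (px u q) ^ 2 / 2) ^ 2 = ε * (px (px u) q) ^ 2 :=
  stmt_18_general mp1 mp2 mm1 mm2 p1 p2 n1 n2 ε hparp hparm hne hp1 hn1 g hg u hux huz
end

section
/- For any ε > 0 and the square R with boundary data m± on the parabola m₂ = m₁²/2 with jump normal ν parallel to m⁺ − m⁻, the infimum of E_ε over the admissible class A_R is bounded below by |(Σ(m⁺) − Σ(m⁻))·ν|. -/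
/-!
For a `C²` function `u`, the entropy flux `Σ` satisfies
`div Σ(∇u) = ∂ₓ²u · (∂_z u − (∂ₓu)²/2)`, the mixed second derivatives cancelling; by AM–GM this is
pointwise at most half the energy density. Integrating over `R` and applying the divergence theorem
in the frame `(ν, τ)`, the boundary data make the flux through the sides `{(x,z)·ν = ±1/2}` equal to
`(Σ(m⁺) − Σ(m⁻))·ν`, while periodicity in the `τ` direction makes the fluxes through the other two
sides cancel.
-/

open MeasureTheory

open Set

section PartialDerivatives

variable {f : ℝ × ℝ → ℝ} {q : ℝ × ℝ}

theorem hasDerivAt_px_s19 (hf : DifferentiableAt ℝ f q) :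
    HasDerivAt (fun s => f (s, q.2)) (px f q) q.1 :=
  (hf.comp q.1 (differentiableAt_id.prodMk (differentiableAt_const q.2))).hasDerivAt

theorem hasDerivAt_pz_s19 (hf : DifferentiableAt ℝ f q) :
    HasDerivAt (fun t => f (q.1, t)) (pz f q) q.2 :=
  (hf.comp q.2 ((differentiableAt_const q.1).prodMk differentiableAt_id)).hasDerivAt

theorem px_eq_fderiv (hf : DifferentiableAt ℝ f q) : px f q = fderiv ℝ f q (1, 0) :=
  (hasDerivAt_px_s19 hf).unique <| hf.hasFDerivAt.comp_hasDerivAt q.1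
    ((hasDerivAt_id q.1).prodMk (hasDerivAt_const q.1 q.2))

theorem pz_eq_fderiv (hf : DifferentiableAt ℝ f q) : pz f q = fderiv ℝ f q (0, 1) :=
  (hasDerivAt_pz_s19 hf).unique <| hf.hasFDerivAt.comp_hasDerivAt q.2
    ((hasDerivAt_const q.2 q.1).prodMk (hasDerivAt_id q.2))

theorem ContDiff.px {m n : WithTop ℕ∞} (hf : ContDiff ℝ n f) (hmn : m + 1 ≤ n) :
    ContDiff ℝ m (_root_.px f) := by
  have hd : Differentiable ℝ f :=
    hf.differentiable (zero_lt_one.trans_le (le_add_self.trans hmn)).ne'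
  rw [show _root_.px f = fun q => fderiv ℝ f q (1, 0) from funext fun q => px_eq_fderiv (hd q)]
  exact (hf.fderiv_right hmn).clm_apply contDiff_const

theorem ContDiff.pz {m n : WithTop ℕ∞} (hf : ContDiff ℝ n f) (hmn : m + 1 ≤ n) :
    ContDiff ℝ m (_root_.pz f) := by
  have hd : Differentiable ℝ f :=
    hf.differentiable (zero_lt_one.trans_le (le_add_self.trans hmn)).ne'
  rw [show _root_.pz f = fun q => fderiv ℝ f q (0, 1) from funext fun q => pz_eq_fderiv (hd q)]
  exact (hf.fderiv_right hmn).clm_apply contDiff_const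

theorem pz_px_eq_px_pz (hf : ContDiff ℝ 2 f) (q : ℝ × ℝ) : pz (px f) q = px (pz f) q := by
  have hd : Differentiable ℝ f := hf.differentiable (by norm_num)
  have hD : Differentiable ℝ (fderiv ℝ f) :=
    (hf.fderiv_right (m := 1) le_rfl).differentiable one_ne_zero
  have hpx : px f = fun q => fderiv ℝ f q (1, 0) := funext fun q => px_eq_fderiv (hd q)
  have hpz : pz f = fun q => fderiv ℝ f q (0, 1) := funext fun q => pz_eq_fderiv (hd q)
  rw [hpx, hpz, pz_eq_fderiv ((hD q).clm_apply (differentiableAt_const _)),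
    px_eq_fderiv ((hD q).clm_apply (differentiableAt_const _)),
    fderiv_clm_apply (hD q) (differentiableAt_const _),
    fderiv_clm_apply (hD q) (differentiableAt_const _)]
  simpa using (hf.contDiffAt.isSymmSndFDerivAt (by simp)) (0, 1) (1, 0)

end PartialDerivatives

noncomputable def planeRot (c s : ℝ) : ℝ × ℝ →L[ℝ] ℝ × ℝ :=
  (ContinuousLinearMap.fst ℝ ℝ ℝ).smulRight (c, s) +
    (ContinuousLinearMap.snd ℝ ℝ ℝ).smulRight (-s, c)

-- The paper's `R`, with `ν = (c, s)` and `τ = (-s, c)`.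
def tiltedSquare (c s : ℝ) : Set (ℝ × ℝ) :=
  {q | |q.1 * c + q.2 * s| ≤ 1 / 2 ∧ |(-q.1) * s + q.2 * c| ≤ 1 / 2}

section Rotation

variable {c s : ℝ}

@[simp]
theorem planeRot_apply (c s : ℝ) (p : ℝ × ℝ) :
    planeRot c s p = (c * p.1 - s * p.2, s * p.1 + c * p.2) := by
  simp only [planeRot, add_apply, ContinuousLinearMap.smulRight_apply,
    ContinuousLinearMap.coe_fst', ContinuousLinearMap.coe_snd', Prod.smul_mk, smul_eq_mul,
    Prod.mk_add_mk, Prod.mk.injEq]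
  constructor <;> ring

@[simp]
theorem planeRot_one_zero (c s : ℝ) : planeRot c s (1, 0) = (c, s) := by
  simp

@[simp]
theorem planeRot_zero_one (c s : ℝ) : planeRot c s (0, 1) = (-s, c) := by
  simp

theorem planeRot_planeRot_neg (h : c ^ 2 + s ^ 2 = 1) (p : ℝ × ℝ) :
    planeRot c s (planeRot c (-s) p) = p := by
  ext
  · simp only [planeRot_apply]; linear_combination p.1 * h
  · simp only [planeRot_apply]; linear_combination p.2 * h

theorem planeRot_neg_planeRot (h : c ^ 2 + s ^ 2 = 1) (p : ℝ × ℝ) :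
    planeRot c (-s) (planeRot c s p) = p := by
  simpa only [neg_neg] using planeRot_planeRot_neg (s := -s) (by rwa [neg_sq]) p

theorem det_planeRot (c s : ℝ) :
    LinearMap.det (planeRot c s : ℝ × ℝ →ₗ[ℝ] ℝ × ℝ) = c ^ 2 + s ^ 2 := by
  rw [← LinearMap.det_toMatrix (Module.Basis.finTwoProd ℝ), Matrix.det_fin_two]
  simp [LinearMap.toMatrix_apply]
  ring

theorem measurePreserving_planeRot (h : c ^ 2 + s ^ 2 = 1) :
    MeasurePreserving (planeRot c s) := by
  have hdet : LinearMap.det (planeRot c s : ℝ × ℝ →ₗ[ℝ] ℝ × ℝ) = 1 := by rw [det_planeRot, h]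
  refine ⟨(planeRot c s).continuous.measurable, ?_⟩
  have := Measure.map_linearMap_addHaar_eq_smul_addHaar (μ := volume)
    (by rw [hdet]; exact one_ne_zero)
  rw [hdet] at this
  simpa using this

theorem measurableEmbedding_planeRot (h : c ^ 2 + s ^ 2 = 1) :
    MeasurableEmbedding (planeRot c s) :=
  (LinearMap.isClosedEmbedding_of_injective (f := (planeRot c s : ℝ × ℝ →ₗ[ℝ] ℝ × ℝ))
    (LinearMap.ker_eq_bot_of_injective
      (Function.LeftInverse.injective (planeRot_neg_planeRot h)))).measurableEmbedding

theorem planeRot_fst_mul_add_snd_mul (h : c ^ 2 + s ^ 2 = 1) (p : ℝ × ℝ) :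
    (planeRot c s p).1 * c + (planeRot c s p).2 * s = p.1 := by
  simp only [planeRot_apply]; linear_combination p.1 * h

theorem neg_planeRot_fst_mul_add_snd_mul (h : c ^ 2 + s ^ 2 = 1) (p : ℝ × ℝ) :
    -(planeRot c s p).1 * s + (planeRot c s p).2 * c = p.2 := by
  simp only [planeRot_apply]; linear_combination p.2 * h

theorem preimage_planeRot_tiltedSquare (h : c ^ 2 + s ^ 2 = 1) :
    planeRot c s ⁻¹' tiltedSquare c s = Icc (-(1 / 2), -(1 / 2)) (1 / 2, 1 / 2) := by
  ext p
  simp only [tiltedSquare, mem_preimage, mem_ofPred_eq, planeRot_fst_mul_add_snd_mul h,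
    neg_planeRot_fst_mul_add_snd_mul h, abs_le, mem_Icc, Prod.le_def]
  tauto

theorem isCompact_tiltedSquare (h : c ^ 2 + s ^ 2 = 1) : IsCompact (tiltedSquare c s) := by
  rw [← image_preimage_eq (tiltedSquare c s)
    (Function.RightInverse.surjective (planeRot_planeRot_neg h)), preimage_planeRot_tiltedSquare h]
  exact isCompact_Icc.image (planeRot c s).continuous

theorem setIntegral_tiltedSquare {E : Type*} [NormedAddCommGroup E] [NormedSpace ℝ E]
    (h : c ^ 2 + s ^ 2 = 1) (F : ℝ × ℝ → E) :
    ∫ q in tiltedSquare c s, F q =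
      ∫ p in Icc (-(1 / 2), -(1 / 2)) (1 / 2, 1 / 2), F (planeRot c s p) := by
  rw [← preimage_planeRot_tiltedSquare h,
    (measurePreserving_planeRot h).setIntegral_preimage_emb (measurableEmbedding_planeRot h)]

end Rotation

noncomputable def planeDiv (V : ℝ × ℝ → ℝ × ℝ) (q : ℝ × ℝ) : ℝ :=
  px (fun p => (V p).1) q + pz (fun p => (V p).2) q

-- The components of `V ∘ planeRot c s` along `ν = (c, s)` and `τ = (-s, c)`.
noncomputable def rotatedField (c s : ℝ) (V : ℝ × ℝ → ℝ × ℝ) (p : ℝ × ℝ) : ℝ × ℝ :=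
  planeRot c (-s) (V (planeRot c s p))

section Divergence

variable {V : ℝ × ℝ → ℝ × ℝ}

theorem planeDiv_eq_fderiv {q : ℝ × ℝ} (hV : DifferentiableAt ℝ V q) :
    planeDiv V q = (fderiv ℝ V q (1, 0)).1 + (fderiv ℝ V q (0, 1)).2 := by
  rw [planeDiv, px_eq_fderiv hV.fst, pz_eq_fderiv hV.snd, fderiv.fst hV, fderiv.snd hV]
  rfl

theorem ContinuousLinearMap.apply_prod_eq {E : Type*} [AddCommGroup E] [Module ℝ E]
    [TopologicalSpace E] (L : ℝ × ℝ →L[ℝ] E) (a b : ℝ) :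
    L (a, b) = a • L (1, 0) + b • L (0, 1) := by
  rw [← map_smul, ← map_smul, ← map_add]
  simp

theorem planeDiv_rotatedField {c s : ℝ} (h : c ^ 2 + s ^ 2 = 1) (hV : Differentiable ℝ V)
    (p : ℝ × ℝ) : planeDiv (rotatedField c s V) p = planeDiv V (planeRot c s p) := by
  set D := fderiv ℝ V (planeRot c s p)
  have hW : HasFDerivAt (rotatedField c s V) ((planeRot c (-s)).comp (D.comp (planeRot c s))) p :=
    (planeRot c (-s)).hasFDerivAt.comp p ((hV _).hasFDerivAt.comp p (planeRot c s).hasFDerivAt)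
  rw [planeDiv_eq_fderiv hW.differentiableAt, hW.fderiv, planeDiv_eq_fderiv (hV _)]
  simp only [ContinuousLinearMap.comp_apply, planeRot_one_zero, planeRot_zero_one,
    planeRot_apply c (-s)]
  rw [D.apply_prod_eq c s, D.apply_prod_eq (-s) c]
  simp only [Prod.fst_add, Prod.snd_add, Prod.smul_fst, Prod.smul_snd, smul_eq_mul]
  linear_combination ((D (1, 0)).1 + (D (0, 1)).2) * h

end Divergence

section DivergenceTheorem

variable {V : ℝ × ℝ → ℝ × ℝ} {c s : ℝ}

theorem integral_planeDiv_tiltedSquare (h : c ^ 2 + s ^ 2 = 1) (hV : ContDiff ℝ 1 V) :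
    ∫ q in tiltedSquare c s, planeDiv V q =
      (((∫ x in (-(1 / 2) : ℝ)..1 / 2, (rotatedField c s V (x, 1 / 2)).2) -
          ∫ x in (-(1 / 2) : ℝ)..1 / 2, (rotatedField c s V (x, -(1 / 2))).2) +
        ∫ y in (-(1 / 2) : ℝ)..1 / 2, (rotatedField c s V (1 / 2, y)).1) -
      ∫ y in (-(1 / 2) : ℝ)..1 / 2, (rotatedField c s V (-(1 / 2), y)).1 := by
  have hW : ContDiff ℝ 1 (rotatedField c s V) :=
    (planeRot c (-s)).contDiff.comp (hV.comp (planeRot c s).contDiff)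
  have hWd : Differentiable ℝ (rotatedField c s V) := hW.differentiable one_ne_zero
  rw [setIntegral_tiltedSquare h]
  simp only [← planeDiv_rotatedField h (hV.differentiable one_ne_zero),
    planeDiv_eq_fderiv (hWd _)]
  have hdiv : Continuous fun p =>
      (fderiv ℝ (rotatedField c s V) p (1, 0)).1 + (fderiv ℝ (rotatedField c s V) p (0, 1)).2 := by
    have := hW.continuous_fderiv one_ne_zero
    fun_prop
  exact integral_divergence_prod_Icc_of_hasFDerivAt_of_le
    (fun p => (rotatedField c s V p).1) (fun p => (rotatedField c s V p).2)
    (fun p => (ContinuousLinearMap.fst ℝ ℝ ℝ).comp (fderiv ℝ (rotatedField c s V) p))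
    (fun p => (ContinuousLinearMap.snd ℝ ℝ ℝ).comp (fderiv ℝ (rotatedField c s V) p))
    (-(1 / 2), -(1 / 2)) (1 / 2, 1 / 2) (by norm_num [Prod.le_def])
    hW.continuous.fst.continuousOn hW.continuous.snd.continuousOn
    (fun p _ => (hWd p).hasFDerivAt.fst) (fun p _ => (hWd p).hasFDerivAt.snd)
    (hdiv.continuousOn.integrableOn_compact isCompact_Icc)

theorem integral_planeDiv_tiltedSquare_of_periodic (h : c ^ 2 + s ^ 2 = 1) (hV : ContDiff ℝ 1 V)
    {vp vm : ℝ × ℝ}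
    (hplus : ∀ q : ℝ × ℝ, q.1 * c + q.2 * s = 1 / 2 → V q = vp)
    (hminus : ∀ q : ℝ × ℝ, q.1 * c + q.2 * s = -(1 / 2) → V q = vm)
    (hper : ∀ q : ℝ × ℝ, V (q.1 - s, q.2 + c) = V q) :
    ∫ q in tiltedSquare c s, planeDiv V q = (vp.1 - vm.1) * c + (vp.2 - vm.2) * s := by
  have htop (x : ℝ) : rotatedField c s V (x, 1 / 2) = rotatedField c s V (x, -(1 / 2)) := by
    rw [rotatedField, rotatedField, ← hper (planeRot c s (x, -(1 / 2)))]
    congr 2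
    simp only [planeRot_apply, Prod.mk.injEq]
    constructor <;> ring
  have hside {t : ℝ} {v : ℝ × ℝ} (hv : ∀ q : ℝ × ℝ, q.1 * c + q.2 * s = t → V q = v) (y : ℝ) :
      (rotatedField c s V (t, y)).1 = v.1 * c + v.2 * s := by
    rw [rotatedField, hv _ (planeRot_fst_mul_add_snd_mul h _), planeRot_apply]
    ring
  rw [integral_planeDiv_tiltedSquare h hV]
  simp only [htop, hside hplus, hside hminus, intervalIntegral.integral_const, smul_eq_mul]
  ring

end DivergenceTheorem

-- The paper's `Σ`.
noncomputable def entropyFlux (m : ℝ × ℝ) : ℝ × ℝ :=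
  (m.1 * m.2 - m.1 ^ 3 / 6, -(m.1 ^ 2) / 2)

theorem contDiff_entropyFlux {n : WithTop ℕ∞} : ContDiff ℝ n entropyFlux := by
  unfold entropyFlux; fun_prop

theorem planeDiv_entropyFlux {u : ℝ × ℝ → ℝ} (hu : ContDiff ℝ 2 u) (q : ℝ × ℝ) :
    planeDiv (fun p => entropyFlux (px u p, pz u p)) q =
      px (px u) q * (pz u q - px u q ^ 2 / 2) := by
  have hux : Differentiable ℝ (px u) := (hu.px (m := 1) le_rfl).differentiable one_ne_zero
  have huz : Differentiable ℝ (pz u) := (hu.pz (m := 1) le_rfl).differentiable one_ne_zero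
  have hx := hasDerivAt_px_s19 (hux q)
  have hz := hasDerivAt_px_s19 (huz q)
  have hx' := hasDerivAt_pz_s19 (hux q)
  have e1 : px (fun p => (entropyFlux (px u p, pz u p)).1) q = _ :=
    ((hx.mul hz).sub ((hx.pow 3).div_const 6)).deriv
  have e2 : pz (fun p => (entropyFlux (px u p, pz u p)).2) q = _ :=
    ((hx'.pow 2).neg.div_const 2).deriv
  rw [planeDiv, e1, e2, pz_px_eq_px_pz hu]
  ring

theorem sq_div_sqrt_add_sq_div_sqrt {a b : ℝ} (h : a ^ 2 + b ^ 2 ≠ 0) :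
    (a / Real.sqrt (a ^ 2 + b ^ 2)) ^ 2 + (b / Real.sqrt (a ^ 2 + b ^ 2)) ^ 2 = 1 := by
  rw [div_pow, div_pow, Real.sq_sqrt (by positivity), ← add_div, div_self h]

theorem abs_mul_le_half_inv_mul_sq_add_mul_sq {ε : ℝ} (hε : 0 < ε) (a b : ℝ) :
    |a * b| ≤ 1 / 2 * (ε⁻¹ * b ^ 2 + ε * a ^ 2) := by
  have hsq : 0 ≤ ε⁻¹ * (|b| - ε * |a|) ^ 2 := by positivity
  have hexp : ε⁻¹ * (|b| - ε * |a|) ^ 2 = ε⁻¹ * b ^ 2 - 2 * |a * b| + ε * a ^ 2 := by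
    rw [abs_mul, ← sq_abs a, ← sq_abs b]
    field_simp
    ring
  linarith

theorem stmt_19_general (mp1 mp2 mm1 mm2 p1 p2 n1 n2 ε : ℝ) (hε : 0 < ε)
    (hne : (mp1, mp2) ≠ (mm1, mm2))
    (hp1 : p1 = mp1 - mm1) (hp2 : p2 = mp2 - mm2)
    (hn1 : n1 = p1 / Real.sqrt (p1 ^ 2 + p2 ^ 2))
    (hn2 : n2 = p2 / Real.sqrt (p1 ^ 2 + p2 ^ 2))
    (u : ℝ × ℝ → ℝ) (hu : ContDiff ℝ 2 u)
    (hbcp : ∀ q : ℝ × ℝ, q.1 * n1 + q.2 * n2 = 1 / 2 →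
      px u q = mp1 ∧ pz u q = mp2)
    (hbcm : ∀ q : ℝ × ℝ, q.1 * n1 + q.2 * n2 = -(1 / 2) →
      px u q = mm1 ∧ pz u q = mm2)
    (hper : ∀ q : ℝ × ℝ,
      px u (q.1 - n2, q.2 + n1) = px u q ∧ pz u (q.1 - n2, q.2 + n1) = pz u q) :
    |((mp1 * mp2 - mp1 ^ 3 / 6) - (mm1 * mm2 - mm1 ^ 3 / 6)) * n1
        + ((-(mp1 ^ 2) / 2) - (-(mm1 ^ 2) / 2)) * n2|
      ≤ (1 / 2) * ∫ q in {q : ℝ × ℝ |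
            |q.1 * n1 + q.2 * n2| ≤ 1 / 2 ∧ |(-q.1) * n2 + q.2 * n1| ≤ 1 / 2},
          (ε⁻¹ * (pz u q - (px u q) ^ 2 / 2) ^ 2 + ε * (px (px u) q) ^ 2) := by
  have hp : p1 ^ 2 + p2 ^ 2 ≠ 0 := by
    intro h0
    obtain ⟨h1, h2⟩ := (add_eq_zero_iff_of_nonneg (sq_nonneg p1) (sq_nonneg p2)).1 h0
    exact hne (Prod.ext (by simpa [hp1, sub_eq_zero] using h1)
      (by simpa [hp2, sub_eq_zero] using h2))
  have hn : n1 ^ 2 + n2 ^ 2 = 1 := hn1 ▸ hn2 ▸ sq_div_sqrt_add_sq_div_sqrt hp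
  have hux : ContDiff ℝ 1 (px u) := hu.px (by norm_num)
  have huz : ContDiff ℝ 1 (pz u) := hu.pz (by norm_num)
  have huxx : Continuous (px (px u)) := (hux.px (m := 0) (by norm_num)).continuous
  have hflux := integral_planeDiv_tiltedSquare_of_periodic hn
    (V := fun q => entropyFlux (px u q, pz u q))
    (vp := entropyFlux (mp1, mp2)) (vm := entropyFlux (mm1, mm2))
    (contDiff_entropyFlux.comp (hux.prodMk huz))
    (fun q hq => by rw [(hbcp q hq).1, (hbcp q hq).2])
    (fun q hq => by rw [(hbcm q hq).1, (hbcm q hq).2])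
    (fun q => by rw [(hper q).1, (hper q).2])
  simp only [planeDiv_entropyFlux hu] at hflux
  have henergy : Continuous fun q =>
      ε⁻¹ * (pz u q - px u q ^ 2 / 2) ^ 2 + ε * px (px u) q ^ 2 := by
    have := hux.continuous; have := huz.continuous; fun_prop
  calc _ = |∫ q in tiltedSquare n1 n2, px (px u) q * (pz u q - px u q ^ 2 / 2)| := by
        rw [hflux]; rfl
    _ ≤ ∫ q in tiltedSquare n1 n2,
          1 / 2 * (ε⁻¹ * (pz u q - px u q ^ 2 / 2) ^ 2 + ε * px (px u) q ^ 2) := by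
        rw [← Real.norm_eq_abs]
        refine norm_integral_le_of_norm_le ?_ (Filter.Eventually.of_forall fun q => ?_)
        · exact (henergy.continuousOn.integrableOn_compact (isCompact_tiltedSquare hn)).const_mul _
        · rw [Real.norm_eq_abs]
          exact abs_mul_le_half_inv_mul_sq_add_mul_sq hε _ _
    _ = _ := integral_const_mul _ _

/-- Lower bound for the local problem on the unit square R with jump normal
ν = n = p/|p| and tangent τ = (−n₂, n₁): for every admissible competitor
(∇u = m± on the sides {(x,z)·ν = ±1/2}, ∇u periodic with period 1 in the τ
direction), the energy E_ε(u) is at least |(Σ(m⁺) − Σ(m⁻))·ν|. -/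
theorem stmt_19 (mp1 mp2 mm1 mm2 p1 p2 n1 n2 ε : ℝ) (hε : 0 < ε)
    (hparp : mp2 = mp1 ^ 2 / 2) (hparm : mm2 = mm1 ^ 2 / 2)
    (hne : (mp1, mp2) ≠ (mm1, mm2))
    (hp1 : p1 = mp1 - mm1) (hp2 : p2 = mp2 - mm2)
    (hn1 : n1 = p1 / Real.sqrt (p1 ^ 2 + p2 ^ 2))
    (hn2 : n2 = p2 / Real.sqrt (p1 ^ 2 + p2 ^ 2))
    (u : ℝ × ℝ → ℝ) (hu : ContDiff ℝ 2 u)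
    (hbcp : ∀ q : ℝ × ℝ, q.1 * n1 + q.2 * n2 = 1 / 2 →
      px u q = mp1 ∧ pz u q = mp2)
    (hbcm : ∀ q : ℝ × ℝ, q.1 * n1 + q.2 * n2 = -(1 / 2) →
      px u q = mm1 ∧ pz u q = mm2)
    (hper : ∀ q : ℝ × ℝ,
      px u (q.1 - n2, q.2 + n1) = px u q ∧ pz u (q.1 - n2, q.2 + n1) = pz u q) :
    |((mp1 * mp2 - mp1 ^ 3 / 6) - (mm1 * mm2 - mm1 ^ 3 / 6)) * n1
        + ((-(mp1 ^ 2) / 2) - (-(mm1 ^ 2) / 2)) * n2|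
      ≤ (1 / 2) * ∫ q in {q : ℝ × ℝ |
            |q.1 * n1 + q.2 * n2| ≤ 1 / 2 ∧ |(-q.1) * n2 + q.2 * n1| ≤ 1 / 2},
          (ε⁻¹ * (pz u q - (px u q) ^ 2 / 2) ^ 2 + ε * (px (px u) q) ^ 2) :=
  stmt_19_general mp1 mp2 mm1 mm2 p1 p2 n1 n2 ε hε hne hp1 hp2 hn1 hn2 u hu hbcp hbcm hper
end
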